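/- arXiv:1111.2687 — 2 statements merged into one kernel-verified Lean document; each statement's English description precedes it below -/
import Mathlib

section
/- Let (ρ_t, ψ_t) be a smooth solution, on an open time interval with ρ_t ∈ 𝒫_*(𝒳), of the geodesic equations: ∂_t ρ_t(x) + ∑_y (ψ_t(y) − ψ_t(x)) ρ̂_t(x,y) K(x,y) = 0 and ∂_t ψ_t(x) + ½ ∑_y (ψ_t(x) − ψ_t(y))² ∂₁θ(ρ_t(x),ρ_t(y)) K(x,y) = 0 for all x ∈ 𝒳. Then the second time derivative of the entropy along the curve equals ℬ: d²/dt² ℋ(ρ_t) = ℬ(ρ_t, ψ_t). -/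
open scoped BigOperators ENNReal
open MeasureTheory Set Filter

noncomputable section

/-- The logarithmic mean `θ(s,t) = ∫₀¹ s^(1-p) t^p dp`. -/
def logMean (s t : ℝ) : ℝ := ∫ p in (0:ℝ)..1, s ^ (1 - p) * t ^ p

/-- An irreducible Markov kernel on a finite set, together with its (unique) stationary
probability measure, assumed reversible. -/
structure MarkovSetup (X : Type*) [Fintype X] where
  K : X → X → ℝ
  pi : X → ℝ
  K_nonneg : ∀ x y, 0 ≤ K x y
  K_rowSum : ∀ x, ∑ y, K x y = 1
  irreducible : ∀ x y : X, ∃ (n : ℕ) (c : Fin (n + 1) → X),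
    c 0 = x ∧ c (Fin.last n) = y ∧ ∀ i : Fin n, 0 < K (c i.castSucc) (c i.succ)
  pi_pos : ∀ x, 0 < pi x
  pi_sum : ∑ x, pi x = 1
  steady : ∀ y, ∑ x, pi x * K x y = pi y
  reversible : ∀ x y, K x y * pi x = K y x * pi y

namespace MarkovSetup

variable {X : Type*} [Fintype X] [DecidableEq X] (M : MarkovSetup X)

/-- Probability densities with respect to `π`. -/
def IsDensity (ρ : X → ℝ) : Prop := (∀ x, 0 ≤ ρ x) ∧ ∑ x, M.pi x * ρ x = 1

/-- Strictly positive probability densities. -/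
def IsPosDensity (ρ : X → ℝ) : Prop := (∀ x, 0 < ρ x) ∧ ∑ x, M.pi x * ρ x = 1

/-- The relative entropy `ℋ(ρ) = ∑ π(x) ρ(x) log ρ(x)`. -/
def entropy (ρ : X → ℝ) : ℝ := ∑ x, M.pi x * ρ x * Real.log (ρ x)

/-- The discrete Fisher information `ℐ(ρ)` (finite expression; relevant for positive densities). -/
def fisher (ρ : X → ℝ) : ℝ :=
  (1 / 2) * ∑ x, ∑ y, (ρ x - ρ y) * (Real.log (ρ x) - Real.log (ρ y)) * M.K x y * M.pi x

/-- The action `𝒜(ρ,ψ)`. -/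
def action (ρ ψ : X → ℝ) : ℝ :=
  (1 / 2) * ∑ x, ∑ y, (ψ x - ψ y) ^ 2 * logMean (ρ x) (ρ y) * M.K x y * M.pi x

/-- The continuity equation at time `t`. -/
def ContEq (ρ ψ : ℝ → X → ℝ) (t : ℝ) : Prop :=
  ∀ x, deriv (fun s => ρ s x) t +
    ∑ y, (ψ t y - ψ t x) * logMean (ρ t x) (ρ t y) * M.K x y = 0

/-- Admissible pairs in the definition of the metric `𝒲`. -/
def Admissible (ρ₀ ρ₁ : X → ℝ) (ρ ψ : ℝ → X → ℝ) : Prop :=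
  (∀ x, ContDiff ℝ (⊤ : ℕ∞) fun t => ρ t x) ∧
  (∀ t ∈ Icc (0:ℝ) 1, M.IsDensity (ρ t)) ∧
  ρ 0 = ρ₀ ∧ ρ 1 = ρ₁ ∧
  (∀ x, Measurable fun t => ψ t x) ∧
  ∀ t ∈ Ioo (0:ℝ) 1, M.ContEq ρ ψ t

/-- The squared distance `𝒲(ρ₀,ρ₁)²` as the infimum of the action. -/
def Wsq (ρ₀ ρ₁ : X → ℝ) : ℝ :=
  sInf { A : ℝ | ∃ ρ ψ, M.Admissible ρ₀ ρ₁ ρ ψ ∧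
    IntervalIntegrable (fun t => M.action (ρ t) (ψ t)) volume 0 1 ∧
    A = ∫ t in (0:ℝ)..1, M.action (ρ t) (ψ t) }

/-- The metric `𝒲`. -/
def W (ρ₀ ρ₁ : X → ℝ) : ℝ := Real.sqrt (M.Wsq ρ₀ ρ₁)

/-- Constant speed geodesics in `(𝒫(𝒳),𝒲)`, parametrised by `[0,1]`. -/
def IsGeodesic (γ : ℝ → X → ℝ) : Prop :=
  (∀ t ∈ Icc (0:ℝ) 1, M.IsDensity (γ t)) ∧
  ∀ s ∈ Icc (0:ℝ) 1, ∀ t ∈ Icc (0:ℝ) 1,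
    M.W (γ s) (γ t) = |s - t| * M.W (γ 0) (γ 1)

/-- Non-local Ricci curvature lower bound `Ric(K) ≥ κ`. -/
def RicciBound (κ : ℝ) : Prop :=
  ∀ γ : ℝ → X → ℝ, M.IsGeodesic γ → ∀ t ∈ Icc (0:ℝ) 1,
    M.entropy (γ t) ≤ (1 - t) * M.entropy (γ 0) + t * M.entropy (γ 1)
      - κ / 2 * t * (1 - t) * (M.W (γ 0) (γ 1)) ^ 2

/-- Total variation distance. -/
def dTV (ρ₀ ρ₁ : X → ℝ) : ℝ := ∑ x, M.pi x * |ρ₀ x - ρ₁ x|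

/-- Couplings of two densities. -/
def IsCoupling (ρ₀ ρ₁ : X → ℝ) (q : X → X → ℝ) : Prop :=
  (∀ x y, 0 ≤ q x y) ∧ (∀ x, ∑ y, q x y = ρ₀ x * M.pi x) ∧
  ∀ y, ∑ x, q x y = ρ₁ y * M.pi y

/-- The `L¹`-Wasserstein distance associated with a metric `d`. -/
def W1 (d : X → X → ℝ) (ρ₀ ρ₁ : X → ℝ) : ℝ :=
  sInf { A : ℝ | ∃ q, M.IsCoupling ρ₀ ρ₁ q ∧ A = ∑ x, ∑ y, d x y * q x y }

/-- The `L²`-Wasserstein distance associated with a metric `d`. -/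
def W2 (d : X → X → ℝ) (ρ₀ ρ₁ : X → ℝ) : ℝ :=
  sInf { A : ℝ | ∃ q, M.IsCoupling ρ₀ ρ₁ q ∧
    A = Real.sqrt (∑ x, ∑ y, (d x y) ^ 2 * q x y) }

/-- The graph distance induced by `K`. -/
def graphDist (x y : X) : ℝ :=
  (sInf {n : ℕ | ∃ c : Fin (n + 1) → X, c 0 = x ∧ c (Fin.last n) = y ∧
    ∀ i : Fin n, 0 < M.K (c i.castSucc) (c i.succ)} : ℕ)

/-- The density of the Dirac mass at `x`. -/
def dirac (x : X) : X → ℝ := fun y => if y = x then 1 / M.pi x else 0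

/-- The restriction of `𝒲` to Dirac densities. -/
def dW (x y : X) : ℝ := M.W (M.dirac x) (M.dirac y)

/-- The minimal positive transition probability. -/
def kmin : ℝ := sInf { a : ℝ | ∃ x y, 0 < M.K x y ∧ a = M.K x y }

/-- The heat semigroup `P_t = e^{t(K - I)}` acting on densities. -/
def heat (t : ℝ) (ρ : X → ℝ) : X → ℝ :=
  (∑' n : ℕ, (t ^ n / n.factorial : ℝ) •
    (((Matrix.of fun x y => M.K x y) - 1) ^ n)).mulVec ρ

/-- The gradient `∇ψ(x,y) = ψ(y) - ψ(x)`. -/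
def grad (ψ : X → ℝ) : X → X → ℝ := fun x y => ψ y - ψ x

/-- The generator `Δ = K - I`. -/
def lap (f : X → ℝ) : X → ℝ := fun x => (∑ y, M.K x y * f y) - f x

/-- The inner product `⟨Φ,Ψ⟩_π`. -/
def ipPi (Φ Ψ : X → X → ℝ) : ℝ := (1 / 2) * ∑ x, ∑ y, Φ x y * Ψ x y * M.K x y * M.pi x

/-- `Δ̂ρ(x,y) = ∂₁θ(ρx,ρy)·Δρ(x) + ∂₂θ(ρx,ρy)·Δρ(y)` with `θ` the logarithmic mean. -/
def hatLap (ρ : X → ℝ) : X → X → ℝ := fun x y =>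
  deriv (fun u => logMean u (ρ y)) (ρ x) * M.lap ρ x +
  deriv (fun v => logMean (ρ x) v) (ρ y) * M.lap ρ y

/-- The quantity `ℬ(ρ,ψ) = ½⟨Δ̂ρ·∇ψ,∇ψ⟩_π − ⟨ρ̂·∇ψ,∇Δψ⟩_π`. -/
def Bform (ρ ψ : X → ℝ) : ℝ :=
  (1 / 2) * M.ipPi (fun x y => M.hatLap ρ x y * grad ψ x y) (grad ψ) -
    M.ipPi (fun x y => logMean (ρ x) (ρ y) * grad ψ x y) (grad (M.lap ψ))

/-- Upper right Dini derivative. -/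
def dini (f : ℝ → ℝ) (t : ℝ) : ℝ :=
  limsup (fun h => (f (t + h) - f t) / h) (nhdsWithin 0 (Ioi 0))

/-- The evolution variational inequality `EVI(κ)` between `ρ` and `ν`, along the heat flow. -/
def EVI (κ : ℝ) (ρ ν : X → ℝ) : Prop :=
  ∀ t : ℝ, 0 ≤ t →
    (1 / 2) * dini (fun u => (M.W (M.heat u ρ) ν) ^ 2) t +
      κ / 2 * (M.W (M.heat t ρ) ν) ^ 2 ≤ M.entropy ν - M.entropy (M.heat t ρ)

end MarkovSetup

set_option linter.unusedSectionVars false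

section Aux
variable {X : Type*} [Fintype X] [DecidableEq X] (M : MarkovSetup X)

lemma logMean_symm (s t : ℝ) : logMean s t = logMean t s := by
  unfold logMean
  have h := intervalIntegral.integral_comp_sub_left (a := (0:ℝ)) (b := 1)
    (fun p => t ^ (1 - p) * s ^ p) 1
  simp only [sub_zero, sub_self] at h
  rw [← h]
  refine intervalIntegral.integral_congr fun p _ => ?_
  rw [sub_sub_cancel, mul_comm]

lemma logMean_mul_log {s t : ℝ} (hs : 0 < s) (ht : 0 < t) :
    logMean s t * (Real.log t - Real.log s) = t - s := by
  rcases eq_or_ne s t with rfl | hst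
  · simp
  · have hc : Real.log t - Real.log s ≠ 0 := by
      intro h
      have : t = s := by
        rw [← Real.exp_log ht, ← Real.exp_log hs,
          show Real.log t = Real.log s by linarith]
      exact hst this.symm
    have hint : ∀ p : ℝ, s ^ (1 - p) * t ^ p
        = Real.exp (Real.log s + p * (Real.log t - Real.log s)) := by
      intro p
      rw [Real.rpow_def_of_pos hs, Real.rpow_def_of_pos ht, ← Real.exp_add]
      congr 1; ring
    have hF : ∀ p ∈ Set.uIcc (0:ℝ) 1,
        HasDerivAt (fun q : ℝ =>
            Real.exp (Real.log s + q * (Real.log t - Real.log s)) / (Real.log t - Real.log s))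
          (Real.exp (Real.log s + p * (Real.log t - Real.log s))) p := by
      intro p _
      have h1 : HasDerivAt (fun q : ℝ => Real.log s + q * (Real.log t - Real.log s))
          (Real.log t - Real.log s) p := by
        simpa using (((hasDerivAt_id p).mul_const (Real.log t - Real.log s)).const_add (Real.log s))
      have h2 := (h1.exp).div_const (Real.log t - Real.log s)
      simpa [mul_div_cancel_right₀ _ hc] using h2
    have hcont : IntervalIntegrable
        (fun p : ℝ => Real.exp (Real.log s + p * (Real.log t - Real.log s))) volume 0 1 :=
      (Real.continuous_exp.comp (continuous_const.add (continuous_id.mul continuous_const))).intervalIntegrable 0 1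
    have hval : logMean s t = (t - s) / (Real.log t - Real.log s) := by
      unfold logMean
      rw [intervalIntegral.integral_congr (fun p _ => hint p),
        intervalIntegral.integral_eq_sub_of_hasDerivAt hF hcont]
      rw [show Real.log s + 1 * (Real.log t - Real.log s) = Real.log t by ring,
        show Real.log s + 0 * (Real.log t - Real.log s) = Real.log s by ring,
        Real.exp_log ht, Real.exp_log hs, div_sub_div_same]
    rw [hval]
    field_simp

lemma deriv_logMean_symm (s t : ℝ) :
    deriv (fun v => logMean s v) t = deriv (fun u => logMean u s) t := by
  have h : (fun v => logMean s v) = fun v => logMean v s := funext fun v => logMean_symm s v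
  rw [h]

lemma MS_rev_swap (F : X → X → ℝ) :
    ∑ x, ∑ y, F x y * (M.K x y * M.pi x) = ∑ x, ∑ y, F y x * (M.K x y * M.pi x) := by
  rw [Finset.sum_comm]
  refine Finset.sum_congr rfl fun x _ => Finset.sum_congr rfl fun y _ => ?_
  rw [M.reversible y x]

lemma MS_sum_lap (f g : X → ℝ) :
    ∑ x, M.pi x * (f x * M.lap g x)
      = (∑ x, ∑ y, (f x * g y) * (M.K x y * M.pi x)) - ∑ x, M.pi x * (f x * g x) := by
  rw [← Finset.sum_sub_distrib]
  refine Finset.sum_congr rfl fun x _ => ?_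
  have h : ∑ y, (f x * g y) * (M.K x y * M.pi x)
      = (M.pi x * f x) * ∑ y, M.K x y * g y := by
    rw [Finset.mul_sum]
    exact Finset.sum_congr rfl fun y _ => by ring
  rw [h]
  simp only [MarkovSetup.lap]
  ring

lemma MS_selfadj (f g : X → ℝ) :
    ∑ x, M.pi x * (f x * M.lap g x) = ∑ x, M.pi x * (g x * M.lap f x) := by
  rw [MS_sum_lap, MS_sum_lap]
  have h1 : ∑ x, ∑ y, (g x * f y) * (M.K x y * M.pi x)
      = ∑ x, ∑ y, (f x * g y) * (M.K x y * M.pi x) := by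
    rw [MS_rev_swap M (fun x y => g x * f y)]
    exact Finset.sum_congr rfl fun x _ => Finset.sum_congr rfl fun y _ => by ring
  rw [h1]
  congr 1
  exact Finset.sum_congr rfl fun x _ => by ring

lemma MS_alg1 (ρ ψ : X → ℝ) (hρ : ∀ x, 0 < ρ x) :
    ∑ x, M.pi x * ((∑ y, (ψ y - ψ x) * logMean (ρ x) (ρ y) * M.K x y) * Real.log (ρ x))
      = ∑ x, M.pi x * (ψ x * M.lap ρ x) := by
  have step1 : ∑ x, M.pi x * ((∑ y, (ψ y - ψ x) * logMean (ρ x) (ρ y) * M.K x y) * Real.log (ρ x))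
      = (∑ x, ∑ y, (ψ y * logMean (ρ x) (ρ y) * Real.log (ρ x)) * (M.K x y * M.pi x))
        - ∑ x, ∑ y, (ψ x * logMean (ρ x) (ρ y) * Real.log (ρ x)) * (M.K x y * M.pi x) := by
    rw [← Finset.sum_sub_distrib]
    refine Finset.sum_congr rfl fun x _ => ?_
    rw [Finset.sum_mul, Finset.mul_sum, ← Finset.sum_sub_distrib]
    exact Finset.sum_congr rfl fun y _ => by ring
  have step2 : ∑ x, ∑ y, (ψ y * logMean (ρ x) (ρ y) * Real.log (ρ x)) * (M.K x y * M.pi x)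
      = ∑ x, ∑ y, (ψ x * logMean (ρ x) (ρ y) * Real.log (ρ y)) * (M.K x y * M.pi x) := by
    rw [MS_rev_swap M (fun x y => ψ y * logMean (ρ x) (ρ y) * Real.log (ρ x))]
    exact Finset.sum_congr rfl fun x _ => Finset.sum_congr rfl fun y _ => by
      rw [logMean_symm (ρ y) (ρ x)]
  have step3 : ∑ x, ∑ y, (ψ x * logMean (ρ x) (ρ y) * Real.log (ρ y)) * (M.K x y * M.pi x)
        - ∑ x, ∑ y, (ψ x * logMean (ρ x) (ρ y) * Real.log (ρ x)) * (M.K x y * M.pi x)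
      = ∑ x, ∑ y, (ψ x * (ρ y - ρ x)) * (M.K x y * M.pi x) := by
    rw [← Finset.sum_sub_distrib]
    refine Finset.sum_congr rfl fun x _ => ?_
    rw [← Finset.sum_sub_distrib]
    refine Finset.sum_congr rfl fun y _ => ?_
    have key := logMean_mul_log (hρ x) (hρ y)
    linear_combination (ψ x * (M.K x y * M.pi x)) * key
  rw [step1, step2, step3]
  refine Finset.sum_congr rfl fun x _ => ?_
  have e1 : ∑ y, (ψ x * (ρ y - ρ x)) * (M.K x y * M.pi x)
      = (M.pi x * ψ x) * (∑ y, M.K x y * ρ y) - (M.pi x * ψ x * ρ x) * (∑ y, M.K x y) := by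
    rw [Finset.mul_sum, Finset.mul_sum, ← Finset.sum_sub_distrib]
    exact Finset.sum_congr rfl fun y _ => by ring
  rw [e1, M.K_rowSum x]
  simp only [MarkovSetup.lap]
  ring

lemma MS_alg2a (ρ ψ : X → ℝ) :
    ∑ x, M.pi x * (ψ x * M.lap (fun z => ∑ y, (ψ y - ψ z) * logMean (ρ z) (ρ y) * M.K z y) x)
      = - M.ipPi (fun x y => logMean (ρ x) (ρ y) * MarkovSetup.grad ψ x y)
          (MarkovSetup.grad (M.lap ψ)) := by
  rw [MS_selfadj]
  -- now LHS = ∑ x, π x * (g x * lap ψ x)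
  have hexp : ∑ x, M.pi x * ((∑ y, (ψ y - ψ x) * logMean (ρ x) (ρ y) * M.K x y) * M.lap ψ x)
      = ∑ x, ∑ y, (M.lap ψ x * (ψ y - ψ x) * logMean (ρ x) (ρ y)) * (M.K x y * M.pi x) := by
    refine Finset.sum_congr rfl fun x _ => ?_
    rw [Finset.sum_mul, Finset.mul_sum]
    exact Finset.sum_congr rfl fun y _ => by ring
  have hswap : ∑ x, ∑ y, (M.lap ψ y * (ψ y - ψ x) * logMean (ρ x) (ρ y)) * (M.K x y * M.pi x)
      = - ∑ x, ∑ y, (M.lap ψ x * (ψ y - ψ x) * logMean (ρ x) (ρ y)) * (M.K x y * M.pi x) := by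
    rw [MS_rev_swap M (fun x y => M.lap ψ y * (ψ y - ψ x) * logMean (ρ x) (ρ y)),
      ← Finset.sum_neg_distrib]
    refine Finset.sum_congr rfl fun x _ => ?_
    rw [← Finset.sum_neg_distrib]
    refine Finset.sum_congr rfl fun y _ => ?_
    rw [logMean_symm (ρ y) (ρ x)]
    ring
  have hip : M.ipPi (fun x y => logMean (ρ x) (ρ y) * MarkovSetup.grad ψ x y)
        (MarkovSetup.grad (M.lap ψ))
      = (1/2) * ((∑ x, ∑ y, (M.lap ψ y * (ψ y - ψ x) * logMean (ρ x) (ρ y)) * (M.K x y * M.pi x))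
          - ∑ x, ∑ y, (M.lap ψ x * (ψ y - ψ x) * logMean (ρ x) (ρ y)) * (M.K x y * M.pi x)) := by
    simp only [MarkovSetup.ipPi, MarkovSetup.grad]
    rw [← Finset.sum_sub_distrib]
    congr 1
    refine Finset.sum_congr rfl fun x _ => ?_
    rw [← Finset.sum_sub_distrib]
    exact Finset.sum_congr rfl fun y _ => by ring
  rw [hexp, hip, hswap]
  ring

lemma MS_alg2b (ρ ψ : X → ℝ) :
    ∑ x, M.pi x * ((1/2 * ∑ y, (ψ x - ψ y)^2 * deriv (fun u => logMean u (ρ y)) (ρ x) * M.K x y)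
        * M.lap ρ x)
      = 1/2 * M.ipPi (fun x y => M.hatLap ρ x y * MarkovSetup.grad ψ x y)
          (MarkovSetup.grad ψ) := by
  have hexp : ∑ x, M.pi x * ((1/2 * ∑ y, (ψ x - ψ y)^2 * deriv (fun u => logMean u (ρ y)) (ρ x) * M.K x y)
        * M.lap ρ x)
      = (1/2) * ∑ x, ∑ y, ((ψ x - ψ y)^2 * deriv (fun u => logMean u (ρ y)) (ρ x) * M.lap ρ x)
          * (M.K x y * M.pi x) := by
    rw [Finset.mul_sum]
    refine Finset.sum_congr rfl fun x _ => ?_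
    simp only [Finset.mul_sum, Finset.sum_mul]
    exact Finset.sum_congr rfl fun y _ => by ring
  have hip : M.ipPi (fun x y => M.hatLap ρ x y * MarkovSetup.grad ψ x y) (MarkovSetup.grad ψ)
      = (1/2) * ((∑ x, ∑ y, ((ψ x - ψ y)^2 * deriv (fun u => logMean u (ρ y)) (ρ x) * M.lap ρ x)
            * (M.K x y * M.pi x))
          + ∑ x, ∑ y, ((ψ x - ψ y)^2 * deriv (fun v => logMean (ρ x) v) (ρ y) * M.lap ρ y)
            * (M.K x y * M.pi x)) := by
    simp only [MarkovSetup.ipPi, MarkovSetup.grad, MarkovSetup.hatLap]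
    rw [← Finset.sum_add_distrib]
    congr 1
    refine Finset.sum_congr rfl fun x _ => ?_
    rw [← Finset.sum_add_distrib]
    exact Finset.sum_congr rfl fun y _ => by ring
  have hswap : ∑ x, ∑ y, ((ψ x - ψ y)^2 * deriv (fun v => logMean (ρ x) v) (ρ y) * M.lap ρ y)
        * (M.K x y * M.pi x)
      = ∑ x, ∑ y, ((ψ x - ψ y)^2 * deriv (fun u => logMean u (ρ y)) (ρ x) * M.lap ρ x)
        * (M.K x y * M.pi x) := by
    rw [MS_rev_swap M (fun x y => (ψ x - ψ y)^2 * deriv (fun v => logMean (ρ x) v) (ρ y) * M.lap ρ y)]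
    refine Finset.sum_congr rfl fun x _ => Finset.sum_congr rfl fun y _ => ?_
    rw [deriv_logMean_symm (ρ y) (ρ x)]
    ring_nf
  rw [hexp, hip, hswap]
  ring

end Aux

/-- **Proposition 4.4.**  Let `(ρ_t, ψ_t)` be a smooth solution of the geodesic equations on
an open time interval `(a,b)`, with `ρ_t ∈ 𝒫_*(𝒳)`.  Then the second derivative of the
entropy along the curve satisfies `d²/dt² ℋ(ρ_t) = ℬ(ρ_t, ψ_t)`. -/
theorem entropy_second_deriv_eq_Bform {X : Type*} [Fintype X] [DecidableEq X]
    (M : MarkovSetup X) (a b : ℝ) (ρ ψ : ℝ → X → ℝ)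
    (hρsm : ∀ x, ContDiffOn ℝ (⊤ : ℕ∞) (fun t => ρ t x) (Set.Ioo a b))
    (hψsm : ∀ x, ContDiffOn ℝ (⊤ : ℕ∞) (fun t => ψ t x) (Set.Ioo a b))
    (hpos : ∀ t ∈ Set.Ioo a b, M.IsPosDensity (ρ t))
    (hgeo₁ : ∀ t ∈ Set.Ioo a b, ∀ x, deriv (fun s => ρ s x) t +
      ∑ y, (ψ t y - ψ t x) * logMean (ρ t x) (ρ t y) * M.K x y = 0)
    (hgeo₂ : ∀ t ∈ Set.Ioo a b, ∀ x, deriv (fun s => ψ s x) t +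
      (1 / 2) * ∑ y, (ψ t x - ψ t y) ^ 2 *
        deriv (fun u => logMean u (ρ t y)) (ρ t x) * M.K x y = 0) :
    ∀ t ∈ Set.Ioo a b,
      deriv (fun s => deriv (fun r => M.entropy (ρ r)) s) t = M.Bform (ρ t) (ψ t) := by
  intro t ht
  have hUo : IsOpen (Set.Ioo a b) := isOpen_Ioo
  set ρ' : ℝ → X → ℝ := fun s x => deriv (fun r => ρ r x) s with hρ'def
  set ψ' : ℝ → X → ℝ := fun s x => deriv (fun r => ψ r x) s with hψ'def
  have hρd : ∀ x, ∀ s ∈ Set.Ioo a b, HasDerivAt (fun r => ρ r x) (ρ' s x) s := fun x s hs =>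
    (((hρsm x).differentiableOn (by simp)).differentiableAt (hUo.mem_nhds hs)).hasDerivAt
  have hψd : ∀ x, ∀ s ∈ Set.Ioo a b, HasDerivAt (fun r => ψ r x) (ψ' s x) s := fun x s hs =>
    (((hψsm x).differentiableOn (by simp)).differentiableAt (hUo.mem_nhds hs)).hasDerivAt
  -- Step A: first derivative of the entropy
  have hA : ∀ s ∈ Set.Ioo a b, deriv (fun r => M.entropy (ρ r)) s
      = -∑ x, M.pi x * (ψ s x * M.lap (ρ s) x) := by
    intro s hs
    have hpos' := (hpos s hs).1
    have hder : HasDerivAt (fun r => M.entropy (ρ r))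
        (∑ x, ((M.pi x * ρ' s x) * Real.log (ρ s x)
          + (M.pi x * ρ s x) * (ρ' s x / ρ s x))) s := by
      show HasDerivAt (fun r => ∑ x, M.pi x * ρ r x * Real.log (ρ r x)) _ s
      exact HasDerivAt.fun_sum fun x _ =>
        ((hρd x s hs).const_mul (M.pi x)).mul ((hρd x s hs).log (hpos' x).ne')
    have hzero : ∑ x, M.pi x * ρ' s x = 0 := by
      have hsum : HasDerivAt (fun r => ∑ x, M.pi x * ρ r x) (∑ x, M.pi x * ρ' s x) s :=
        HasDerivAt.fun_sum fun x _ => (hρd x s hs).const_mul (M.pi x)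
      have hev : (fun r => ∑ x, M.pi x * ρ r x) =ᶠ[nhds s] fun _ => (1:ℝ) := by
        filter_upwards [hUo.mem_nhds hs] with r hr using (hpos r hr).2
      have hconst : HasDerivAt (fun r => ∑ x, M.pi x * ρ r x) 0 s :=
        (hasDerivAt_const s (1:ℝ)).congr_of_eventuallyEq hev
      exact hsum.unique hconst
    have hCE : ∀ x, ρ' s x = -∑ y, (ψ s y - ψ s x) * logMean (ρ s x) (ρ s y) * M.K x y := by
      intro x; have := hgeo₁ s hs x; linarith
    calc deriv (fun r => M.entropy (ρ r)) s
        = ∑ x, ((M.pi x * ρ' s x) * Real.log (ρ s x)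
            + (M.pi x * ρ s x) * (ρ' s x / ρ s x)) := hder.deriv
      _ = ∑ x, (M.pi x * (ρ' s x * Real.log (ρ s x)) + M.pi x * ρ' s x) := by
          refine Finset.sum_congr rfl fun x _ => ?_
          have h := (hpos' x).ne'
          field_simp
      _ = ∑ x, M.pi x * (ρ' s x * Real.log (ρ s x)) + ∑ x, M.pi x * ρ' s x :=
          Finset.sum_add_distrib
      _ = ∑ x, M.pi x * (ρ' s x * Real.log (ρ s x)) := by rw [hzero, add_zero]
      _ = -∑ x, M.pi x * ((∑ y, (ψ s y - ψ s x) * logMean (ρ s x) (ρ s y) * M.K x y)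
            * Real.log (ρ s x)) := by
          rw [← Finset.sum_neg_distrib]
          refine Finset.sum_congr rfl fun x _ => ?_
          rw [hCE x]; ring
      _ = -∑ x, M.pi x * (ψ s x * M.lap (ρ s) x) := by
          rw [MS_alg1 M (ρ s) (ψ s) hpos']
  -- Step B: differentiate the formula from step A
  have hE : HasDerivAt (fun s => -∑ x, M.pi x * (ψ s x * M.lap (ρ s) x))
      (-∑ x, M.pi x * (ψ' t x * M.lap (ρ t) x
        + ψ t x * ((∑ y, M.K x y * ρ' t y) - ρ' t x))) t := by
    refine (HasDerivAt.fun_sum fun x _ => ?_).neg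
    have hlap : HasDerivAt (fun s => M.lap (ρ s) x) ((∑ y, M.K x y * ρ' t y) - ρ' t x) t := by
      show HasDerivAt (fun s => (∑ y, M.K x y * ρ s y) - ρ s x) _ t
      exact (HasDerivAt.fun_sum fun y _ => (hρd y t ht).const_mul (M.K x y)).sub (hρd x t ht)
    exact ((hψd x t ht).mul hlap).const_mul (M.pi x)
  have hderiv2 : deriv (fun s => deriv (fun r => M.entropy (ρ r)) s) t
      = -∑ x, M.pi x * (ψ' t x * M.lap (ρ t) x
          + ψ t x * ((∑ y, M.K x y * ρ' t y) - ρ' t x)) := by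
    have hev : (fun s => deriv (fun r => M.entropy (ρ r)) s)
        =ᶠ[nhds t] (fun s => -∑ x, M.pi x * (ψ s x * M.lap (ρ s) x)) := by
      filter_upwards [hUo.mem_nhds ht] with s hs using hA s hs
    rw [hev.deriv_eq]
    exact hE.deriv
  rw [hderiv2]
  -- Step C: substitute the geodesic equations and conclude
  have hCEt : ∀ x, ρ' t x = -∑ y, (ψ t y - ψ t x) * logMean (ρ t x) (ρ t y) * M.K x y := by
    intro x; have := hgeo₁ t ht x; linarith
  have hHJ : ∀ x, ψ' t x = -(1/2 * ∑ y, (ψ t x - ψ t y)^2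
      * deriv (fun u => logMean u (ρ t y)) (ρ t x) * M.K x y) := by
    intro x; have := hgeo₂ t ht x; linarith
  have key : -∑ x, M.pi x * (ψ' t x * M.lap (ρ t) x
        + ψ t x * ((∑ y, M.K x y * ρ' t y) - ρ' t x))
      = (∑ x, M.pi x * ((1/2 * ∑ y, (ψ t x - ψ t y)^2
            * deriv (fun u => logMean u (ρ t y)) (ρ t x) * M.K x y) * M.lap (ρ t) x))
        + ∑ x, M.pi x * (ψ t x
            * M.lap (fun z => ∑ y, (ψ t y - ψ t z) * logMean (ρ t z) (ρ t y) * M.K z y) x) := by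
    rw [← Finset.sum_add_distrib, ← Finset.sum_neg_distrib]
    refine Finset.sum_congr rfl fun x _ => ?_
    rw [hHJ x]
    have h1 : (∑ y, M.K x y * ρ' t y) - ρ' t x
        = -(M.lap (fun z => ∑ y, (ψ t y - ψ t z) * logMean (ρ t z) (ρ t y) * M.K z y) x) := by
      simp only [MarkovSetup.lap]
      rw [hCEt x]
      have h2 : ∑ y, M.K x y * ρ' t y
          = -∑ y, M.K x y * ∑ z, (ψ t z - ψ t y) * logMean (ρ t y) (ρ t z) * M.K y z := by
        rw [← Finset.sum_neg_distrib]
        refine Finset.sum_congr rfl fun y _ => ?_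
        rw [hCEt y]; ring
      rw [h2]; ring
    rw [h1]; ring
  rw [key, MS_alg2b, MS_alg2a]
  simp only [MarkovSetup.Bform]
  ring
end
end

section
/- Let λ ∈ (0,1) and suppose Ric(K) ≥ κ for some κ ∈ ℝ. Then the lazy Markov kernel K_λ := (1−λ)I + λK (which is irreducible and reversible with the same stationary measure π) satisfies Ric(K_λ) ≥ λκ. -/
open scoped BigOperators ENNReal
open MeasureTheory Set Filter

noncomputable section

section LazyAux

open scoped Pointwise

variable {X : Type*} [Fintype X] [DecidableEq X]

lemma double_sum_factor (c : ℝ) (f g : X → X → ℝ)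
    (h : ∀ x y, f x y = c * g x y) :
    ∑ x, ∑ y, f x y = c * ∑ x, ∑ y, g x y := by
  rw [Finset.mul_sum]
  refine Finset.sum_congr rfl fun x _ => ?_
  rw [Finset.mul_sum]
  exact Finset.sum_congr rfl fun y _ => h x y

lemma action_smul (M : MarkovSetup X) (ρ ψ : X → ℝ) (c : ℝ) :
    M.action ρ (fun x => c * ψ x) = c ^ 2 * M.action ρ ψ := by
  unfold MarkovSetup.action
  rw [double_sum_factor (c ^ 2)
    (fun x y => (c * ψ x - c * ψ y) ^ 2 * logMean (ρ x) (ρ y) * M.K x y * M.pi x)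
    (fun x y => (ψ x - ψ y) ^ 2 * logMean (ρ x) (ρ y) * M.K x y * M.pi x)
    (fun x y => by ring)]
  ring

variable (lam : ℝ) (M M' : MarkovSetup X)

lemma action_lazy
    (hK : M'.K = fun x y => (1 - lam) * (if x = y then 1 else 0) + lam * M.K x y)
    (hpi : M'.pi = M.pi) (ρ ψ : X → ℝ) :
    M'.action ρ ψ = lam * M.action ρ ψ := by
  simp only [MarkovSetup.action, hK, hpi]
  rw [double_sum_factor lam
    (fun x y => (ψ x - ψ y) ^ 2 * logMean (ρ x) (ρ y) *
      ((1 - lam) * (if x = y then 1 else 0) + lam * M.K x y) * M.pi x)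
    (fun x y => (ψ x - ψ y) ^ 2 * logMean (ρ x) (ρ y) * M.K x y * M.pi x)
    (fun x y => ?_)]
  · ring
  · by_cases h : x = y
    · subst h; simp
    · simp only [if_neg h, mul_zero, zero_add]; ring

lemma conteq_lazy
    (hK : M'.K = fun x y => (1 - lam) * (if x = y then 1 else 0) + lam * M.K x y)
    (ρ ψ : ℝ → X → ℝ) (t : ℝ) :
    M'.ContEq ρ ψ t ↔ M.ContEq ρ (fun s x => lam * ψ s x) t := by
  unfold MarkovSetup.ContEq
  refine forall_congr' fun x => ?_
  have hsum : (∑ y, (ψ t y - ψ t x) * logMean (ρ t x) (ρ t y) * M'.K x y)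
      = ∑ y, (lam * ψ t y - lam * ψ t x) * logMean (ρ t x) (ρ t y) * M.K x y := by
    rw [hK]
    refine Finset.sum_congr rfl fun y _ => ?_
    by_cases h : x = y
    · subst h; simp
    · simp only [if_neg h, mul_zero, zero_add]; ring
  rw [hsum]

lemma density_lazy (hpi : M'.pi = M.pi) (ρ : X → ℝ) :
    M'.IsDensity ρ ↔ M.IsDensity ρ := by
  unfold MarkovSetup.IsDensity; rw [hpi]

lemma admissible_lazy (hlam : 0 < lam)
    (hK : M'.K = fun x y => (1 - lam) * (if x = y then 1 else 0) + lam * M.K x y)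
    (hpi : M'.pi = M.pi) (ρ₀ ρ₁ : X → ℝ) (ρ ψ : ℝ → X → ℝ) :
    M'.Admissible ρ₀ ρ₁ ρ ψ ↔ M.Admissible ρ₀ ρ₁ ρ (fun s x => lam * ψ s x) := by
  constructor
  · rintro ⟨hs, hd, h0, h1, hm, hc⟩
    exact ⟨hs, fun t ht => (density_lazy M M' hpi (ρ t)).mp (hd t ht), h0, h1,
      fun x => (hm x).const_mul lam,
      fun t ht => (conteq_lazy lam M M' hK ρ ψ t).mp (hc t ht)⟩
  · rintro ⟨hs, hd, h0, h1, hm, hc⟩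
    refine ⟨hs, fun t ht => (density_lazy M M' hpi (ρ t)).mpr (hd t ht), h0, h1,
      fun x => ?_, fun t ht => (conteq_lazy lam M M' hK ρ ψ t).mpr (hc t ht)⟩
    have := (hm x).const_mul lam⁻¹
    simpa [← mul_assoc, inv_mul_cancel₀ hlam.ne'] using this

lemma wsq_lazy (hlam : 0 < lam)
    (hK : M'.K = fun x y => (1 - lam) * (if x = y then 1 else 0) + lam * M.K x y)
    (hpi : M'.pi = M.pi) (ρ₀ ρ₁ : X → ℝ) :
    M'.Wsq ρ₀ ρ₁ = lam⁻¹ * M.Wsq ρ₀ ρ₁ := by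
  have hl0 : lam ≠ 0 := hlam.ne'
  unfold MarkovSetup.Wsq
  have hset : {A : ℝ | ∃ ρ ψ, M'.Admissible ρ₀ ρ₁ ρ ψ ∧
      IntervalIntegrable (fun t => M'.action (ρ t) (ψ t)) volume 0 1 ∧
      A = ∫ t in (0:ℝ)..1, M'.action (ρ t) (ψ t)}
      = lam⁻¹ • {A : ℝ | ∃ ρ ψ, M.Admissible ρ₀ ρ₁ ρ ψ ∧
      IntervalIntegrable (fun t => M.action (ρ t) (ψ t)) volume 0 1 ∧
      A = ∫ t in (0:ℝ)..1, M.action (ρ t) (ψ t)} := by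
    ext A
    simp only [Set.mem_smul_set, Set.mem_setOf_eq, smul_eq_mul]
    constructor
    · rintro ⟨ρ, ψ, hadm, hint, rfl⟩
      have heq : (fun t => M.action (ρ t) ((fun s x => lam * ψ s x) t))
          = fun t => lam * M'.action (ρ t) (ψ t) := by
        funext t
        beta_reduce
        rw [action_smul, action_lazy lam M M' hK hpi]; ring
      refine ⟨∫ t in (0:ℝ)..1, M.action (ρ t) ((fun s x => lam * ψ s x) t),
        ⟨ρ, fun s x => lam * ψ s x,
          (admissible_lazy lam M M' hlam hK hpi ρ₀ ρ₁ ρ ψ).mp hadm, ?_, rfl⟩, ?_⟩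
      · rw [heq]; exact hint.const_mul lam
      · rw [heq, intervalIntegral.integral_const_mul]
        exact inv_mul_cancel_left₀ hl0 _
    · rintro ⟨B, ⟨ρ, ψ, hadm, hint, rfl⟩, rfl⟩
      have hfe : (fun s x => lam * ((fun s x => lam⁻¹ * ψ s x) s x)) = ψ := by
        funext s x; beta_reduce
        rw [← mul_assoc, mul_inv_cancel₀ hl0, one_mul]
      have heq : (fun t => M'.action (ρ t) ((fun s x => lam⁻¹ * ψ s x) t))
          = fun t => lam⁻¹ * M.action (ρ t) (ψ t) := by
        funext t
        beta_reduce
        rw [action_lazy lam M M' hK hpi, action_smul]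
        field_simp
      refine ⟨ρ, fun s x => lam⁻¹ * ψ s x, ?_, ?_, ?_⟩
      · refine (admissible_lazy lam M M' hlam hK hpi ρ₀ ρ₁ ρ _).mpr ?_
        rw [show (fun s x => lam * ((fun s x => lam⁻¹ * ψ s x) s x)) = ψ from hfe] at *
        simpa [hfe] using hadm
      · rw [heq]; exact hint.const_mul lam⁻¹
      · rw [heq, intervalIntegral.integral_const_mul]
  rw [hset, Real.sInf_smul_of_nonneg (by positivity), smul_eq_mul]

lemma w_lazy (hlam : 0 < lam)
    (hK : M'.K = fun x y => (1 - lam) * (if x = y then 1 else 0) + lam * M.K x y)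
    (hpi : M'.pi = M.pi) (ρ₀ ρ₁ : X → ℝ) :
    M'.W ρ₀ ρ₁ = Real.sqrt lam⁻¹ * M.W ρ₀ ρ₁ := by
  unfold MarkovSetup.W
  rw [wsq_lazy lam M M' hlam hK hpi, Real.sqrt_mul (by positivity)]

lemma geodesic_lazy (hlam : 0 < lam)
    (hK : M'.K = fun x y => (1 - lam) * (if x = y then 1 else 0) + lam * M.K x y)
    (hpi : M'.pi = M.pi) (γ : ℝ → X → ℝ) :
    M'.IsGeodesic γ ↔ M.IsGeodesic γ := by
  have hc : Real.sqrt lam⁻¹ ≠ 0 := by positivity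
  unfold MarkovSetup.IsGeodesic
  refine and_congr (forall₂_congr fun t ht => density_lazy M M' hpi (γ t)) ?_
  refine forall₂_congr fun s hs => ?_
  refine forall₂_congr fun t ht => ?_
  rw [w_lazy lam M M' hlam hK hpi, w_lazy lam M M' hlam hK hpi,
    show |s - t| * (Real.sqrt lam⁻¹ * M.W (γ 0) (γ 1))
      = Real.sqrt lam⁻¹ * (|s - t| * M.W (γ 0) (γ 1)) by ring]
  exact mul_right_inj' hc

lemma entropy_lazy (hpi : M'.pi = M.pi) (ρ : X → ℝ) :
    M'.entropy ρ = M.entropy ρ := by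
  unfold MarkovSetup.entropy; rw [hpi]

end LazyAux


/-- **Proposition 6.1 (Laziness).**  For `λ ∈ (0,1)`, the lazy kernel
`K_λ = (1−λ)I + λK` is again an irreducible reversible Markov kernel with the same
stationary measure `π`, and `Ric(K) ≥ κ` implies `Ric(K_λ) ≥ λκ`. -/
theorem ricci_bound_lazy {X : Type*} [Fintype X] [DecidableEq X]
    (M : MarkovSetup X) (lam κ : ℝ) (hlam : lam ∈ Set.Ioo (0:ℝ) 1)
    (hric : M.RicciBound κ) :
    (∃ M' : MarkovSetup X,
        M'.K = (fun x y => (1 - lam) * (if x = y then 1 else 0) + lam * M.K x y) ∧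
        M'.pi = M.pi) ∧
    ∀ M' : MarkovSetup X,
      M'.K = (fun x y => (1 - lam) * (if x = y then 1 else 0) + lam * M.K x y) →
      M'.pi = M.pi → M'.RicciBound (lam * κ) := by
  obtain ⟨hl0, hl1⟩ := hlam
  constructor
  · refine ⟨{ K := fun x y => (1 - lam) * (if x = y then 1 else 0) + lam * M.K x y
            , pi := M.pi
            , K_nonneg := fun x y => add_nonneg
                (mul_nonneg (by linarith) (by split <;> norm_num))
                (mul_nonneg hl0.le (M.K_nonneg x y))
            , K_rowSum := fun x => by
                have h1 : ∑ y, (if x = y then (1:ℝ) else 0) = 1 := by simp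
                rw [Finset.sum_add_distrib, ← Finset.mul_sum, ← Finset.mul_sum, h1,
                  M.K_rowSum x]; ring
            , irreducible := fun x y => by
                obtain ⟨n, c, h0, h1, hpos⟩ := M.irreducible x y
                exact ⟨n, c, h0, h1, fun i => add_pos_of_nonneg_of_pos
                  (mul_nonneg (by linarith) (by split <;> norm_num))
                  (mul_pos hl0 (hpos i))⟩
            , pi_pos := M.pi_pos
            , pi_sum := M.pi_sum
            , steady := fun y => by
                have h2 : ∀ x, M.pi x * ((1 - lam) * (if x = y then 1 else 0) + lam * M.K x y)
                    = (1 - lam) * (if x = y then M.pi x else 0) + lam * (M.pi x * M.K x y) :=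
                  fun x => by split <;> ring
                have h3 : ∑ x, (if x = y then M.pi x else 0) = M.pi y := by simp
                rw [Finset.sum_congr rfl fun x _ => h2 x, Finset.sum_add_distrib,
                  ← Finset.mul_sum, ← Finset.mul_sum, h3, M.steady y]; ring
            , reversible := fun x y => by
                by_cases h : x = y
                · subst h; rfl
                · have h' : ¬ y = x := fun e => h e.symm
                  simp only [if_neg h, if_neg h', mul_zero, zero_add]
                  linear_combination lam * M.reversible x y }, rfl, rfl⟩
  · intro M' hK hpi γ hγ t ht
    have h := hric γ ((geodesic_lazy lam M M' hl0 hK hpi γ).mp hγ) t ht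
    have hw2 : (M'.W (γ 0) (γ 1)) ^ 2 = lam⁻¹ * (M.W (γ 0) (γ 1)) ^ 2 := by
      rw [w_lazy lam M M' hl0 hK hpi, mul_pow, Real.sq_sqrt (by positivity)]
    simp only [entropy_lazy M M' hpi, hw2]
    have hcoef : lam * κ / 2 * t * (1 - t) * (lam⁻¹ * (M.W (γ 0) (γ 1)) ^ 2)
        = κ / 2 * t * (1 - t) * (M.W (γ 0) (γ 1)) ^ 2 := by
      field_simp
    rw [hcoef]
    exact h
end
end
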